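/- arXiv:1712.09223 — 2 statements merged into one kernel-verified Lean document; each statement's English description precedes it below -/
import Mathlib

section
/- Let V be a finite-dimensional real normed vector space, C ⊆ V a solid closed cone, u ∈ C°, and let S_C = {φ ∈ C* : φ(u) = 1} be the state space, with ∂S_C its boundary relative to the affine span of S_C. For x ∈ ∂C set ν(x) = {φ ∈ ∂S_C : φ(x) = 0}. If U ⊆ ∂S_C is open in ∂S_C, then the set {x ∈ ∂C : ν(x) ⊆ U} is open in ∂C (with the subspace topology). -/
/-- If `U` is open in `∂S_C`, then `{x ∈ ∂C : ν(x) ⊆ U}` is open in `∂C`. -/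
theorem nu_preimage_open
    {V : Type*} [NormedAddCommGroup V] [NormedSpace ℝ V] [FiniteDimensional ℝ V]
    (C : Set V)
    (hCconv : Convex ℝ C)
    (hCscal : ∀ (c : ℝ), 0 ≤ c → ∀ x ∈ C, c • x ∈ C)
    (hCpointed : C ∩ (-C) = {0})
    (hCclosed : IsClosed C)
    (hCsolid : (interior C).Nonempty)
    (u : V) (hu : u ∈ interior C)
    (S : Set (V →L[ℝ] ℝ))
    (hS : S = {φ : V →L[ℝ] ℝ | (∀ x ∈ C, 0 ≤ φ x) ∧ φ u = 1})
    (U : Set (V →L[ℝ] ℝ))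
    (hUopen : ∃ W : Set (V →L[ℝ] ℝ), IsOpen W ∧ U = W ∩ intrinsicFrontier ℝ S) :
    ∃ W : Set V, IsOpen W ∧
      {x ∈ frontier C | ∀ φ ∈ intrinsicFrontier ℝ S, φ x = 0 → φ ∈ U} =
        W ∩ frontier C := by
  obtain ⟨W', hW'open, hUeq⟩ := hUopen
  set K : Set (V →L[ℝ] ℝ) := intrinsicFrontier ℝ S with hK
  -- S is closed
  have hSclosed : IsClosed S := by
    rw [hS]
    have heq : {φ : V →L[ℝ] ℝ | (∀ x ∈ C, 0 ≤ φ x) ∧ φ u = 1}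
        = (⋂ x ∈ C, {φ : V →L[ℝ] ℝ | 0 ≤ φ x}) ∩ {φ : V →L[ℝ] ℝ | φ u = 1} := by
      ext φ; simp [Set.mem_iInter]
    rw [heq]
    refine IsClosed.inter (isClosed_biInter fun x _ => ?_) ?_
    · exact isClosed_le continuous_const (ContinuousLinearMap.apply ℝ ℝ x).continuous
    · exact isClosed_eq (ContinuousLinearMap.apply ℝ ℝ u).continuous continuous_const
  -- S is bounded
  obtain ⟨ε, hεpos, hball⟩ := Metric.isOpen_iff.1 isOpen_interior u hu
  have hballC : Metric.ball u ε ⊆ C := hball.trans interior_subset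
  have hSbdd : Bornology.IsBounded S := by
    have hsub : S ⊆ Metric.closedBall 0 (2 / ε) := by
      intro φ hφ
      rw [hS] at hφ
      obtain ⟨hφpos, hφu⟩ := hφ
      rw [Metric.mem_closedBall, dist_zero_right]
      refine ContinuousLinearMap.opNorm_le_bound φ (by positivity) fun v => ?_
      rcases eq_or_ne v 0 with rfl | hv
      · simp
      · have hvnorm : 0 < ‖v‖ := norm_pos_iff.2 hv
        set c : ℝ := ε / (2 * ‖v‖) with hc
        have hcpos : 0 < c := by positivity
        have hwball : ∀ s : ℝ, s = 1 ∨ s = -1 → u + s • (c • v) ∈ C := by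
          intro s hs
          apply hballC
          rw [Metric.mem_ball, dist_eq_norm, add_sub_cancel_left, norm_smul, norm_smul]
          have hs1 : ‖s‖ = 1 := by rcases hs with rfl | rfl <;> simp
          rw [hs1, one_mul, Real.norm_of_nonneg hcpos.le, hc]
          have : ε / (2 * ‖v‖) * ‖v‖ = ε / 2 := by field_simp
          rw [this]; linarith
        have h1 : 0 ≤ φ (u + (1 : ℝ) • (c • v)) := hφpos _ (hwball 1 (Or.inl rfl))
        have h2 : 0 ≤ φ (u + (-1 : ℝ) • (c • v)) := hwball (-1) (Or.inr rfl) |> hφpos _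
        simp only [map_add, map_smul, smul_eq_mul, hφu] at h1 h2
        have hcancel : (c * φ v) / c = φ v := by field_simp
        have habs : |φ v| ≤ 1 / c := by
          rw [abs_le]
          constructor
          · have hm : -1 ≤ c * φ v := by nlinarith
            calc -(1 / c) = (-1) / c := by ring
              _ ≤ (c * φ v) / c := by gcongr
              _ = φ v := hcancel
          · have hm : c * φ v ≤ 1 := by nlinarith
            calc φ v = (c * φ v) / c := hcancel.symm
              _ ≤ 1 / c := by gcongr
        have hceq : (1 : ℝ) / c = 2 / ε * ‖v‖ := by
          rw [hc]; field_simp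
        rw [hceq] at habs
        exact habs
    exact Metric.isBounded_closedBall.subset hsub
  have hScomp : IsCompact S := Metric.isCompact_of_isClosed_isBounded hSclosed hSbdd
  -- K is compact
  have hKclosed : IsClosed K :=
    isClosed_intrinsicFrontier (affineSpan ℝ S).closed_of_finiteDimensional
  have hKsub : K ⊆ S := intrinsicFrontier_subset hSclosed
  have hKcomp : IsCompact K := hScomp.of_isClosed_subset hKclosed hKsub
  have hKWcomp : IsCompact (K \ W') := hKcomp.diff hW'open
  -- the bad set B is closed
  set B : Set V := {x : V | ∃ φ ∈ K \ W', φ x = 0} with hB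
  have hBclosed : IsClosed B := by
    rw [← isSeqClosed_iff_isClosed]
    intro xs x hxs hx
    choose φs hφs hφx using hxs
    obtain ⟨φ, hφmem, ψ, hψmono, hψtend⟩ := hKWcomp.tendsto_subseq hφs
    refine ⟨φ, hφmem, ?_⟩
    have hpair : Filter.Tendsto (fun n => ((φs (ψ n), xs (ψ n)) : (V →L[ℝ] ℝ) × V))
        Filter.atTop (nhds (φ, x)) :=
      hψtend.prodMk_nhds (hx.comp hψmono.tendsto_atTop)
    have heval : Filter.Tendsto (fun n => (φs (ψ n)) (xs (ψ n)))
        Filter.atTop (nhds (φ x)) :=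
      (isBoundedBilinearMap_apply.continuous.tendsto (φ, x)).comp hpair
    have hzero : (fun n => (φs (ψ n)) (xs (ψ n))) = fun _ => (0 : ℝ) := by
      funext n; exact hφx (ψ n)
    rw [hzero] at heval
    exact (tendsto_nhds_unique tendsto_const_nhds heval).symm
  refine ⟨Bᶜ, hBclosed.isOpen_compl, ?_⟩
  ext x
  simp only [Set.mem_setOf_eq, Set.mem_inter_iff, Set.mem_compl_iff, hB, hUeq]
  constructor
  · rintro ⟨hxf, hall⟩
    refine ⟨?_, hxf⟩
    rintro ⟨φ, ⟨hφK, hφW⟩, hφx⟩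
    exact hφW (hall φ hφK hφx).1
  · rintro ⟨hnB, hxf⟩
    refine ⟨hxf, fun φ hφK hφx => ⟨?_, hφK⟩⟩
    by_contra hφW
    exact hnB ⟨φ, ⟨hφK, hφW⟩, hφx⟩
end

section
/- Let V be a finite-dimensional real normed vector space with d = dim V, let ψ_1, …, ψ_d be linearly independent elements of V*, and set ψ = (1/d)(ψ_1 + ⋯ + ψ_d). Then there exist neighbourhoods U_1, …, U_d of ψ_1, …, ψ_d respectively in V* such that whenever φ_i ∈ U_i for i = 1, …, d, the set K' = {x ∈ V : φ_i(x) ≥ 0 for all i = 1, …, d} is a solid closed cone and ψ(x) > 0 for all x ∈ K' with x ≠ 0. -/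
/-!
The coordinate map `x ↦ (ψ_i x)_i` is a linear isomorphism `V ≃ ℝ^d`, so `‖x‖ ≤ C ∑ |ψ_i x|`
for some `C`. If `‖φ_i - ψ_i‖ ≤ ε` and `φ_i x ≥ 0`, then `ψ_i x ≥ -ε‖x‖`, and a number bounded
below by `-t` is at least its absolute value minus `2t`; hence
`∑ ψ_i x ≥ ∑ |ψ_i x| - 2dε‖x‖ ≥ (1/C - 2dε)‖x‖`, which is positive for small `ε` and `x ≠ 0`.
The cone is then pointed because `ψ` is strictly positive on it, and solid because it contains
a neighbourhood of the point where all `ψ_i` equal `1` once `ε` is small.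
-/

open Module

theorem LinearIndependent.eq_zero_of_forall_dual_apply_eq_zero {ι K V : Type*} [Fintype ι]
    [Field K] [AddCommGroup V] [Module K V] [FiniteDimensional K V] {ψ : ι → Dual K V}
    (hψ : LinearIndependent K ψ) (hcard : Fintype.card ι = finrank K V) {x : V} (hx : ∀ i, ψ i x = 0) : x = 0 := by
  have hspan : Submodule.span K (Set.range ψ) = ⊤ :=
    hψ.span_eq_top_of_card_eq_finrank' (by rw [hcard, Subspace.dual_finrank_eq])
  have hker : Submodule.span K (Set.range ψ) ≤ LinearMap.ker (Dual.eval K V x) :=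
    Submodule.span_le.2 <| Set.range_subset_iff.2 hx
  rw [hspan, top_le_iff, LinearMap.ker_eq_top] at hker
  exact (eval_apply_eq_zero_iff K x).1 hker

section ContinuousDualCoordinates

variable {ι V : Type*} [Fintype ι] [NormedAddCommGroup V] [NormedSpace ℝ V]
  [FiniteDimensional ℝ V] {ψ : ι → V →L[ℝ] ℝ}

theorem injective_pi_of_linearIndependent (hψ : LinearIndependent ℝ ψ)
    (hcard : Fintype.card ι = finrank ℝ V) : Function.Injective (ContinuousLinearMap.pi ψ) := by
  have hψ' : LinearIndependent ℝ fun i => (ψ i : Dual ℝ V) :=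
    hψ.map' (ContinuousLinearMap.coeLM ℝ)
      (LinearMap.ker_eq_bot.2 ContinuousLinearMap.coe_injective)
  refine (injective_iff_map_eq_zero _).2 fun x hx => ?_
  exact hψ'.eq_zero_of_forall_dual_apply_eq_zero hcard fun i => congr_fun hx i

noncomputable def dualCoordEquiv (hψ : LinearIndependent ℝ ψ)
    (hcard : Fintype.card ι = finrank ℝ V) : V ≃L[ℝ] (ι → ℝ) :=
  ((ContinuousLinearMap.pi ψ : V →ₗ[ℝ] ι → ℝ).linearEquivOfInjective
    (injective_pi_of_linearIndependent hψ hcard) (by simp [hcard])).toContinuousLinearEquiv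

theorem norm_le_mul_sum_abs_dual_apply (hψ : LinearIndependent ℝ ψ)
    (hcard : Fintype.card ι = finrank ℝ V) (x : V) :
    ‖x‖ ≤ ‖((dualCoordEquiv hψ hcard).symm : (ι → ℝ) →L[ℝ] V)‖ * ∑ i, |ψ i x| := by
  set e := dualCoordEquiv hψ hcard
  have hcoord : ‖e x‖ ≤ ∑ i, |ψ i x| :=
    (pi_norm_le_iff_of_nonneg (by positivity)).2 fun i =>
      Finset.single_le_sum (f := fun i => |ψ i x|) (fun _ _ => abs_nonneg _) (Finset.mem_univ i)
  calc ‖x‖ = ‖(e.symm : (ι → ℝ) →L[ℝ] V) (e x)‖ := by simp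
    _ ≤ ‖(e.symm : (ι → ℝ) →L[ℝ] V)‖ * ‖e x‖ := ContinuousLinearMap.le_opNorm _ _
    _ ≤ _ := by gcongr

end ContinuousDualCoordinates

theorem Finset.sum_abs_le_sum_add_of_neg_le {ι : Type*} (s : Finset ι) {a : ι → ℝ} {t : ℝ}
    (ht : 0 ≤ t) (ha : ∀ i ∈ s, -t ≤ a i) : ∑ i ∈ s, |a i| ≤ ∑ i ∈ s, a i + 2 * s.card * t := by
  calc ∑ i ∈ s, |a i| ≤ ∑ i ∈ s, (a i + 2 * t) :=
        Finset.sum_le_sum fun i hi => by cases abs_cases (a i) <;> linarith [ha i hi]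
    _ = ∑ i ∈ s, a i + 2 * s.card * t := by
        rw [Finset.sum_add_distrib, Finset.sum_const, nsmul_eq_mul]; ring

theorem ContinuousLinearMap.apply_le_apply_add_norm_sub_mul {E : Type*} [SeminormedAddCommGroup E]
    [NormedSpace ℝ E] (f g : E →L[ℝ] ℝ) (x : E) : g x ≤ f x + ‖g - f‖ * ‖x‖ := by
  have h : (g - f) x ≤ ‖g - f‖ * ‖x‖ := (Real.le_norm_self _).trans ((g - f).le_opNorm x)
  rw [sub_apply] at h
  linarith

section Cone

variable {ι V : Type*} [NormedAddCommGroup V] [NormedSpace ℝ V] (φ : ι → V →L[ℝ] ℝ)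

theorem convex_setOf_forall_nonneg_apply : Convex ℝ {x : V | ∀ i, 0 ≤ φ i x} := by
  rw [Set.ofPred_forall]
  exact convex_iInter fun i => convex_halfSpace_ge (φ i).isLinear 0

theorem smul_mem_setOf_forall_nonneg_apply {c : ℝ} (hc : 0 ≤ c) {x : V}
    (hx : x ∈ {x : V | ∀ i, 0 ≤ φ i x}) : c • x ∈ {x : V | ∀ i, 0 ≤ φ i x} := fun i => by
  simpa only [map_smul, smul_eq_mul] using mul_nonneg hc (hx i)

theorem isClosed_setOf_forall_nonneg_apply : IsClosed {x : V | ∀ i, 0 ≤ φ i x} := by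
  rw [Set.ofPred_forall]
  exact isClosed_iInter fun i => isClosed_le continuous_const (φ i).continuous

theorem mem_interior_setOf_forall_nonneg_apply [Finite ι] {x : V} (hx : ∀ i, 0 < φ i x) :
    x ∈ interior {x : V | ∀ i, 0 ≤ φ i x} := by
  have hopen : IsOpen {x : V | ∀ i, 0 < φ i x} := by
    rw [Set.ofPred_forall]
    exact isOpen_iInter_of_finite fun i => isOpen_lt continuous_const (φ i).continuous
  exact interior_maximal (fun y hy i => (hy i).le) hopen hx

end Cone

theorem inter_neg_eq_singleton_zero_of_pos {V F : Type*} [AddCommGroup V] [FunLike F V ℝ]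
    [AddMonoidHomClass F V ℝ] {K : Set V} (f : F) (h0 : (0 : V) ∈ K)
    (hpos : ∀ x ∈ K, x ≠ 0 → 0 < f x) : K ∩ -K = {0} := by
  refine Set.Subset.antisymm (fun x ⟨hx, hnx⟩ => ?_) (by simpa using h0)
  by_contra hx0
  have := hpos (-x) hnx (neg_ne_zero.2 hx0)
  linarith [hpos x hx hx0, map_neg f x]

theorem sum_apply_pos_of_norm_sub_le {ι V : Type*} [Fintype ι] [NormedAddCommGroup V]
    [NormedSpace ℝ V] {ψ φ : ι → V →L[ℝ] ℝ} {C ε : ℝ} (hC : 0 ≤ C) (hε0 : 0 ≤ ε)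
    (hψ : ∀ x, ‖x‖ ≤ C * ∑ i, |ψ i x|) (hφ : ∀ i, ‖φ i - ψ i‖ ≤ ε)
    (hε : 2 * Fintype.card ι * C * ε < 1) {x : V} (hx : ∀ i, 0 ≤ φ i x) (hx0 : x ≠ 0) :
    0 < ∑ i, ψ i x := by
  have hlow : ∀ i ∈ Finset.univ, -(ε * ‖x‖) ≤ ψ i x := fun i _ => by
    have := (ψ i).apply_le_apply_add_norm_sub_mul (φ i) x
    linarith [hx i, mul_le_mul_of_nonneg_right (hφ i) (norm_nonneg x)]
  have habs := Finset.univ.sum_abs_le_sum_add_of_neg_le (by positivity) hlow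
  rw [Finset.card_univ] at habs
  by_contra! hneg
  have hxpos : 0 < ‖x‖ := norm_pos_iff.2 hx0
  refine lt_irrefl ‖x‖ ?_
  calc ‖x‖ ≤ C * ∑ i, |ψ i x| := hψ x
    _ ≤ C * (∑ i, ψ i x + 2 * Fintype.card ι * (ε * ‖x‖)) := by gcongr
    _ ≤ C * (2 * Fintype.card ι * (ε * ‖x‖)) := by gcongr; linarith
    _ = 2 * Fintype.card ι * C * ε * ‖x‖ := by ring
    _ < ‖x‖ := mul_lt_of_lt_one_left hxpos hε

/-- Lemma on perturbation: near linearly independent functionals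
`ψ_1, …, ψ_d` one can choose functionals `φ_i` so that the cone
`K' = {x : φ_i(x) ≥ 0 ∀ i}` is a solid closed cone for which
`ψ = (1/d)(ψ_1 + ⋯ + ψ_d)` is strictly positive. -/
theorem perturbed_cone_strictly_positive_functional
    {V : Type*} [NormedAddCommGroup V] [NormedSpace ℝ V] [FiniteDimensional ℝ V]
    (d : ℕ) (hd : d = Module.finrank ℝ V)
    (ψ : Fin d → (V →L[ℝ] ℝ)) (hψ : LinearIndependent ℝ ψ) :
    ∃ U : Fin d → Set (V →L[ℝ] ℝ),
      (∀ i, U i ∈ nhds (ψ i)) ∧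
      ∀ φ : Fin d → (V →L[ℝ] ℝ), (∀ i, φ i ∈ U i) →
        Convex ℝ {x : V | ∀ i, 0 ≤ φ i x} ∧
        (∀ (c : ℝ), 0 ≤ c → ∀ x ∈ {x : V | ∀ i, 0 ≤ φ i x}, c • x ∈ {x : V | ∀ i, 0 ≤ φ i x}) ∧
        {x : V | ∀ i, 0 ≤ φ i x} ∩ (-{x : V | ∀ i, 0 ≤ φ i x}) = {0} ∧
        IsClosed {x : V | ∀ i, 0 ≤ φ i x} ∧
        (interior {x : V | ∀ i, 0 ≤ φ i x}).Nonempty ∧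
        ∀ x : V, (∀ i, 0 ≤ φ i x) → x ≠ 0 →
          0 < ((d : ℝ)⁻¹ • ∑ i, ψ i) x := by
  have hcard : Fintype.card (Fin d) = finrank ℝ V := by rw [Fintype.card_fin, hd]
  set e := dualCoordEquiv hψ hcard
  set C := ‖(e.symm : (Fin d → ℝ) →L[ℝ] V)‖
  set x₀ := e.symm 1
  obtain ⟨ε, hε, hεsmall⟩ := exists_pos_mul_lt one_pos (2 * d * C + ‖x₀‖)
  have hεC : 2 * d * C * ε < 1 := by
    nlinarith [mul_nonneg (norm_nonneg x₀) hε.le]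
  have hεx₀ : ‖x₀‖ * ε < 1 := by
    have : 0 ≤ 2 * d * C * ε := by positivity
    nlinarith
  refine ⟨fun i => Metric.ball (ψ i) ε, fun i => Metric.ball_mem_nhds _ hε, fun φ hφ => ?_⟩
  have hclose : ∀ i, ‖φ i - ψ i‖ ≤ ε := fun i => (mem_ball_iff_norm.1 (hφ i)).le
  have hpos : ∀ x, (∀ i, 0 ≤ φ i x) → x ≠ 0 → 0 < ∑ i, ψ i x := fun x hx hx0 =>
    sum_apply_pos_of_norm_sub_le (norm_nonneg _) hε.le (norm_le_mul_sum_abs_dual_apply hψ hcard)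
      hclose (by rwa [Fintype.card_fin]) hx hx0
  have hx₀ : ∀ i, 0 < φ i x₀ := fun i => by
    have h1 : ψ i x₀ = 1 := congr_fun (e.apply_symm_apply 1) i
    have h2 := (φ i).apply_le_apply_add_norm_sub_mul (ψ i) x₀
    rw [norm_sub_rev] at h2
    linarith [mul_le_mul_of_nonneg_right (hclose i) (norm_nonneg x₀)]
  refine ⟨convex_setOf_forall_nonneg_apply φ,
    fun c hc x hx => smul_mem_setOf_forall_nonneg_apply φ hc hx,
    inter_neg_eq_singleton_zero_of_pos (∑ i, ψ i) (fun i => by simp) ?_,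
    isClosed_setOf_forall_nonneg_apply φ, ⟨x₀, mem_interior_setOf_forall_nonneg_apply φ hx₀⟩,
    fun x hx hx0 => ?_⟩
  · simpa using hpos
  · have hsum := hpos x hx hx0
    have hd0 : 0 < (d : ℝ) := by
      rcases Nat.eq_zero_or_pos d with rfl | h
      · simp at hsum
      · exact_mod_cast h
    simpa using mul_pos (inv_pos.2 hd0) hsum
end
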